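/- For any graph G, reg(G) ≤ im(G) + ∇(G), i.e., the Castelnuovo–Mumford regularity of the independence complex is at most the sum of the induced matching number and the decycling number. -/

import Mathlib

open scoped Classical

noncomputable section

/-! ## Simplicial complexes and Castelnuovo–Mumford regularity -/

/-- A (abstract) simplicial complex on the vertex type `V`, given as a
downward closed family of finsets. -/
def IsComplex {V : Type} (Δ : Finset V → Prop) : Prop :=
  ∀ ⦃F G : Finset V⦄, Δ F → G ⊆ F → Δ G

/-- The faces of cardinality `n` of a family `Δ` (faces of card `n` are the
`(n-1)`-dimensional simplices). -/
def Faces {V : Type} (Δ : Finset V → Prop) (n : ℕ) : Type :=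
  {F : Finset V // Δ F ∧ F.card = n}

/-- The simplicial boundary map of the (augmented) chain complex of `Δ` over
a field `k`, from chains on faces of card `n+1` to chains on faces of card `n`,
with signs determined by a linear order on the vertices. -/
def cxBoundary {V : Type} (k : Type) [Field k] [LinearOrder V]
    (Δ : Finset V → Prop) (n : ℕ) :
    (Faces Δ (n + 1) →₀ k) →ₗ[k] (Faces Δ n →₀ k) :=
  Finsupp.lsum k fun F => LinearMap.toSpanSingleton k _
    (∑ x ∈ F.1.attach,
      ((-1 : k) ^ (F.1.filter (fun z => z < x.1)).card) •
        (if h : Δ (F.1.erase x.1) ∧ (F.1.erase x.1).card = n then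
          Finsupp.single (⟨F.1.erase x.1, h⟩ : Faces Δ n) (1 : k) else 0))

/-- Cycles in chain degree `j` (faces of card `j`); in the bottom degree every
chain is a cycle (augmented complex). -/
def cxCycles {V : Type} (k : Type) [Field k] [LinearOrder V]
    (Δ : Finset V → Prop) : (j : ℕ) → Submodule k (Faces Δ j →₀ k)
  | 0 => ⊤
  | (n + 1) => LinearMap.ker (cxBoundary k Δ n)

/-- Nonvanishing of the reduced homology `H̃_{j-1}(Δ; k)`: there is a cycle
supported on faces of cardinality `j` that is not a boundary. -/
def HNontrivial {V : Type} (k : Type) [Field k] [LinearOrder V]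
    (Δ : Finset V → Prop) (j : ℕ) : Prop :=
  ¬ (cxCycles k Δ j ≤ LinearMap.range (cxBoundary k Δ j))

/-- The induced subcomplex `Δ[S]` on a set `S` of vertices. -/
def restrictC {V : Type} (Δ : Finset V → Prop) (S : Set V) : Finset V → Prop :=
  fun F => ↑F ⊆ S ∧ Δ F

/-- The Castelnuovo–Mumford regularity of `Δ` over the field `k`:
the largest `j` such that `H̃_{j-1}(Δ[S]; k) ≠ 0` for some subset `S` of the
vertices. -/
def regC {V : Type} [Fintype V] (k : Type) [Field k] (Δ : Finset V → Prop) : ℕ :=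
  letI : LinearOrder V :=
    LinearOrder.lift' (Fintype.equivFin V) (Fintype.equivFin V).injective
  sSup {j : ℕ | ∃ S : Set V, HNontrivial k (restrictC Δ S) j}

/-- The deletion `del_Δ(x)`. -/
def delC {V : Type} (Δ : Finset V → Prop) (x : V) : Finset V → Prop :=
  fun F => Δ F ∧ x ∉ F

/-- The link `lk_Δ(x)`. -/
def lkC {V : Type} (Δ : Finset V → Prop) (x : V) : Finset V → Prop :=
  fun F => x ∉ F ∧ Δ (insert x F)

/-! ## Independence complexes and regularity of graphs -/

/-- The independence complex of a graph, as a family of finsets. -/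
def indepFaces {V : Type} (G : SimpleGraph V) : Finset V → Prop :=
  fun F => ∀ u ∈ F, ∀ v ∈ F, ¬ G.Adj u v

/-- The regularity `reg(G)` of a graph: the regularity of its independence
complex over `k`. -/
def gReg {V : Type} [Fintype V] (k : Type) [Field k] (G : SimpleGraph V) : ℕ :=
  regC k (indepFaces G)

/-- The regularity of the subgraph of `G` induced on the vertex set `S`. -/
def gRegOn {V : Type} [Fintype V] (k : Type) [Field k] (G : SimpleGraph V)
    (S : Set V) : ℕ :=
  regC k (restrictC (indepFaces G) S)

/-! ## Geometric realization, suspension, wedge -/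

/-- The geometric realization of a family of finsets `Δ` on a finite vertex
type: convex combinations of vertices supported on a face. -/
abbrev cxSpace {V : Type} [Fintype V] (Δ : Finset V → Prop) : Type :=
  {f : V → ℝ // (∃ F : Finset V, Δ F ∧ ∀ v, f v ≠ 0 → v ∈ F) ∧
    (∀ v, 0 ≤ f v) ∧ ∑ v, f v = 1}

/-- Relation generating the unreduced suspension: the two ends of the cylinder
are collapsed to two (always present) poles. -/
def suspRel (X : Type) : (X × unitInterval ⊕ Bool) → (X × unitInterval ⊕ Bool) → Prop
  | Sum.inl (x, t), Sum.inr b => (t = 0 ∧ b = false) ∨ (t = 1 ∧ b = true)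
  | _, _ => False

/-- The unreduced suspension `Σ X` (the join of `X` with a two-point space). -/
abbrev Susp (X : Type) [TopologicalSpace X] : Type := Quot (suspRel X)

/-- Relation generating the wedge sum with respect to chosen basepoints. -/
def wedgeRel (X Y : Type) (x₀ : X) (y₀ : Y) : X ⊕ Y → X ⊕ Y → Prop :=
  fun p q => p = Sum.inl x₀ ∧ q = Sum.inr y₀

/-- The wedge sum `X ∨ Y` with respect to chosen basepoints. -/
abbrev Wedge (X Y : Type) [TopologicalSpace X] [TopologicalSpace Y]
    (x₀ : X) (y₀ : Y) : Type := Quot (wedgeRel X Y x₀ y₀)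

/-! ## Graph invariants -/

/-- `M` is an induced matching of `G`: a set of edges, pairwise with distinct
endpoints and with no edge of `G` between the endpoints of distinct members. -/
def IsInducedMatching {V : Type} (G : SimpleGraph V) (M : Finset (V × V)) : Prop :=
  (∀ p ∈ M, G.Adj p.1 p.2) ∧
    ∀ p ∈ M, ∀ q ∈ M, p ≠ q →
      p.1 ≠ q.1 ∧ p.1 ≠ q.2 ∧ p.2 ≠ q.1 ∧ p.2 ≠ q.2 ∧
      ¬ G.Adj p.1 q.1 ∧ ¬ G.Adj p.1 q.2 ∧ ¬ G.Adj p.2 q.1 ∧ ¬ G.Adj p.2 q.2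

/-- The induced matching number `im(G)`. -/
def inducedMatchingNumber {V : Type} (G : SimpleGraph V) : ℕ :=
  sSup {n : ℕ | ∃ M : Finset (V × V), IsInducedMatching G M ∧ M.card = n}

/-- The independence number `α(G)`. -/
def indepNumber {V : Type} (G : SimpleGraph V) : ℕ :=
  sSup {n : ℕ | ∃ s : Finset V, (∀ u ∈ s, ∀ v ∈ s, ¬ G.Adj u v) ∧ s.card = n}

/-- The decycling number `∇(G)`: the least size of a set of vertices whose
removal leaves an acyclic graph. -/
def decyclingNumber {V : Type} [Fintype V] (G : SimpleGraph V) : ℕ :=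
  sInf {n : ℕ | ∃ D : Finset V, D.card = n ∧
    (G.induce {v : V | v ∉ D}).IsAcyclic}

/-- `K` contains an induced cycle on `n` vertices. -/
def HasInducedCycle {V : Type} (K : SimpleGraph V) (n : ℕ) : Prop :=
  ∃ f : Fin n ↪ V, ∀ i j : Fin n,
    K.Adj (f i) (f j) ↔ ((j : ℕ) = ((i : ℕ) + 1) % n ∨ (i : ℕ) = ((j : ℕ) + 1) % n)

/-- A graph is cochordal if its complement is chordal, i.e. the complement has
no induced cycle of length at least `4`. -/
def Cochordal {V : Type} (H : SimpleGraph V) : Prop :=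
  ∀ n : ℕ, 4 ≤ n → ¬ HasInducedCycle Hᶜ n

/-- The cochordal cover number `cochord(G)`: the least number of cochordal
subgraphs of `G` whose edge sets cover the edges of `G`. -/
def cochordCover {V : Type} (G : SimpleGraph V) : ℕ :=
  sInf {r : ℕ | ∃ H : Fin r → SimpleGraph V,
    (∀ i, H i ≤ G ∧ Cochordal (H i)) ∧ ∀ u v, G.Adj u v → ∃ i, (H i).Adj u v}

/-- The graph `G*` on the edge set of `G`: two edges are adjacent iff the
subgraph induced by their endpoints is `2K₂` (disjoint, with no cross edges). -/
def starGraph {V : Type} (G : SimpleGraph V) : SimpleGraph G.edgeSet :=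
  SimpleGraph.fromRel fun e f =>
    ∀ a ∈ (e.1 : Sym2 V), ∀ b ∈ (f.1 : Sym2 V), a ≠ b ∧ ¬ G.Adj a b

/-- The chromatic number, as a natural number. -/
def chromNum {W : Type} (H : SimpleGraph W) : ℕ :=
  sInf {n : ℕ | ∃ c : W → Fin n, ∀ u v, H.Adj u v → c u ≠ c v}

/-- The clique number `ω`. -/
def cliqueNum {W : Type} (H : SimpleGraph W) : ℕ :=
  sSup {n : ℕ | ∃ s : Finset W, H.IsNClique n s}

/-- A graph is perfect if every induced subgraph has chromatic number equal to
its clique number. -/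
def IsPerfect {W : Type} (H : SimpleGraph W) : Prop :=
  ∀ A : Set W, chromNum (H.induce A) = cliqueNum (H.induce A)

/-! ## Lozin transform, triple subdivision, whiskers -/

/-- Generating relation for the Lozin transform `L_x(G; Y, Z)`: delete `x`,
add the path `y(=0) - a(=1) - b(=2) - z(=3)` on four new vertices, join `y`
to every vertex of `Y` and `z` to every vertex of `Z`. -/
def lozinRel {V : Type} (G : SimpleGraph V) (x : V) (Y Z : Set V) :
    ({w : V // w ≠ x} ⊕ Fin 4) → ({w : V // w ≠ x} ⊕ Fin 4) → Prop
  | Sum.inl u, Sum.inl w => G.Adj u.1 w.1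
  | Sum.inl u, Sum.inr i => (i = 0 ∧ u.1 ∈ Y) ∨ (i = 3 ∧ u.1 ∈ Z)
  | Sum.inr i, Sum.inr j => (i : ℕ) + 1 = (j : ℕ)
  | _, _ => False

/-- The Lozin transform `L_x(G; Y, Z)` of `G` at the vertex `x`. -/
def lozinModel {V : Type} (G : SimpleGraph V) (x : V) (Y Z : Set V) :
    SimpleGraph ({w : V // w ≠ x} ⊕ Fin 4) :=
  SimpleGraph.fromRel (lozinRel G x Y Z)

/-- `{Y, Z}` is a partition of the open neighborhood of `x`. -/
def IsLozinPartition {V : Type} (G : SimpleGraph V) (x : V) (Y Z : Set V) : Prop :=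
  Y ∪ Z = G.neighborSet x ∧ Disjoint Y Z

/-- Generating relation for the triple subdivision of the edge `(u,v)`:
the edge `uv` is removed and replaced by the path `u - y(=0) - a(=1) - b(=2) - v`. -/
def tripleSubRel {V : Type} (G : SimpleGraph V) (u v : V) :
    (V ⊕ Fin 3) → (V ⊕ Fin 3) → Prop
  | Sum.inl a, Sum.inl b => G.Adj a b ∧ ¬(a = u ∧ b = v) ∧ ¬(a = v ∧ b = u)
  | Sum.inl a, Sum.inr i => (a = u ∧ i = 0) ∨ (a = v ∧ i = 2)
  | Sum.inr i, Sum.inr j => (i : ℕ) + 1 = (j : ℕ)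
  | _, _ => False

/-- The triple subdivision `L(G; e)` of `G` at the edge `e = (u,v)`. -/
def tripleSub {V : Type} (G : SimpleGraph V) (u v : V) : SimpleGraph (V ⊕ Fin 3) :=
  SimpleGraph.fromRel (tripleSubRel G u v)

/-- Generating relation for the whisker `W_S(G)`: attach a new pendant vertex
to each vertex of `S`. -/
def whiskerSRel {V : Type} (G : SimpleGraph V) (S : Finset V) :
    (V ⊕ {s : V // s ∈ S}) → (V ⊕ {s : V // s ∈ S}) → Prop
  | Sum.inl a, Sum.inl b => G.Adj a b
  | Sum.inl a, Sum.inr s => a = s.1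
  | _, _ => False

/-- The whisker graph `W_S(G)` on `V ⊕ S`. -/
def whiskerS {V : Type} (G : SimpleGraph V) (S : Finset V) :
    SimpleGraph (V ⊕ {s : V // s ∈ S}) :=
  SimpleGraph.fromRel (whiskerSRel G S)

/-- Generating relation for the full whisker `W(G)`: attach a pendant vertex
to every vertex. -/
def whiskerRel {V : Type} (G : SimpleGraph V) : (V ⊕ V) → (V ⊕ V) → Prop
  | Sum.inl a, Sum.inl b => G.Adj a b
  | Sum.inl a, Sum.inr b => a = b
  | _, _ => False

/-- The full whisker graph `W(G)` on `V ⊕ V`. -/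
def whiskerGraph {V : Type} (G : SimpleGraph V) : SimpleGraph (V ⊕ V) :=
  SimpleGraph.fromRel (whiskerRel G)

/-! ## Vertex decomposability -/

/-- The closed neighborhood of `x` inside the finset `A`. -/
def closedNbrOn {V : Type} (G : SimpleGraph V) (A : Finset V) (x : V) : Finset V :=
  A.filter fun z => z = x ∨ G.Adj x z

/-- `T` is an independent set of `G`. -/
def IsIndepFinset {V : Type} (G : SimpleGraph V) (T : Finset V) : Prop :=
  ∀ u ∈ T, ∀ v ∈ T, ¬ G.Adj u v

/-- `x` is a shedding vertex of the induced subgraph `G[A]`. -/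
def IsSheddingOn {V : Type} (G : SimpleGraph V) (A : Finset V) (x : V) : Prop :=
  ∀ T ⊆ A \ closedNbrOn G A x, IsIndepFinset G T →
    ∃ w ∈ A, G.Adj x w ∧ IsIndepFinset G (insert w T)

/-- Vertex decomposability of the induced subgraph `G[A]`. -/
def VDOn {V : Type} (G : SimpleGraph V) : Finset V → Prop := fun A =>
  (∀ u ∈ A, ∀ v ∈ A, ¬ G.Adj u v) ∨
    ∃ x : {y : V // y ∈ A}, IsSheddingOn G A x.1 ∧
      VDOn G (A.erase x.1) ∧ VDOn G (A \ closedNbrOn G A x.1)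
termination_by A => A.card
decreasing_by
  · exact Finset.card_erase_lt_of_mem x.2
  · refine Finset.card_lt_card ?_
    refine (Finset.ssubset_iff_of_subset Finset.sdiff_subset).2 ⟨x.1, x.2, ?_⟩
    simp [closedNbrOn, x.2]

end

/-!
Fix a vertex `x` of a complex `Δ`. As graded vector spaces the chains of `Δ` split as the chains
of the deletion `del_Δ x` plus the chains of the link `lk_Δ x` shifted by one (the faces through
`x`), and this gives a short exact sequence of complexes. Its long exact sequence shows that a
nonzero class in `H̃_{j-1}(Δ)` forces `H̃_{j-1}(del_Δ x) ≠ 0` or `H̃_{j-2}(lk_Δ x) ≠ 0`.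

For the independence complex of `G[S]`, deletion and link are the independence complexes of
`G[S - x]` and `G[S - N[x]]`, so one argues by induction on `S`. If `G[S]` has a cycle, let `x`
lie in a minimum decycling set: then `∇` drops by one on `S - N[x]`. If `G[S]` is a forest with
an edge, let `x` be the neighbour of a leaf `ℓ`: then `im` drops by one on `S - N[x]`, as the
edge `ℓx` extends every induced matching there. If `G[S]` has no edge, its independence complex
is a simplex, which has no reduced homology in nonnegative degrees.
-/

open Finset

noncomputable section SimplicialChains

variable {V : Type} (k : Type) [Field k] {Δ : Finset V → Prop}

/-- The basis chain of `E`, or `0` when `E` is not a face of `Δ` of cardinality `n`. -/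
def faceChain (Δ : Finset V → Prop) (n : ℕ) (E : Finset V) : Faces Δ n →₀ k :=
  if h : Δ E ∧ E.card = n then Finsupp.single ⟨E, h⟩ 1 else 0

lemma faceChain_val {n : ℕ} (F : Faces Δ n) : faceChain k Δ n F.1 = Finsupp.single F 1 :=
  dif_pos F.2

lemma faceChain_of_not {n : ℕ} {E : Finset V} (h : ¬(Δ E ∧ E.card = n)) :
    faceChain k Δ n E = 0 :=
  dif_neg h

lemma faceChain_of_card_ne {n : ℕ} {E : Finset V} (h : E.card ≠ n) : faceChain k Δ n E = 0 :=
  faceChain_of_not k fun hE => h hE.2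

lemma chain_hom_ext {n : ℕ} {M : Type} [AddCommGroup M] [Module k M]
    {f g : (Faces Δ n →₀ k) →ₗ[k] M}
    (h : ∀ F : Faces Δ n, f (faceChain k Δ n F.1) = g (faceChain k Δ n F.1)) : f = g :=
  Finsupp.lhom_ext' fun F => LinearMap.ext_ring (by simpa [faceChain_val] using h F)

def chainMap {Δ' : Finset V → Prop} {m n : ℕ} (t : Finset V → (Faces Δ' n →₀ k)) :
    (Faces Δ m →₀ k) →ₗ[k] (Faces Δ' n →₀ k) :=
  Finsupp.linearCombination k fun F => t F.1

lemma chainMap_faceChain {Δ' : Finset V → Prop} {m n : ℕ} (t : Finset V → (Faces Δ' n →₀ k))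
    (E : Finset V) :
    chainMap (Δ := Δ) (m := m) k t (faceChain k Δ m E) = if Δ E ∧ E.card = m then t E else 0 := by
  by_cases h : Δ E ∧ E.card = m
  · rw [if_pos h, faceChain, dif_pos h]
    exact (Finsupp.linearCombination_single k (v := fun F : Faces Δ m => t F.1) 1 _).trans
      (one_smul _ _)
  · rw [if_neg h, faceChain_of_not k h, map_zero]

variable [LinearOrder V]

/-- The sign with which `cxBoundary` hits the facet `F \ {x}` of `F`. -/
def cxSign (F : Finset V) (x : V) : k :=
  (-1 : k) ^ (F.filter fun z => z < x).card

lemma cxSign_mul_self (F : Finset V) (x : V) : cxSign k F x * cxSign k F x = 1 := by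
  rw [cxSign, ← mul_pow]
  norm_num

lemma cxSign_mul_cxSign_erase {F : Finset V} {x y : V} (hx : x ∈ F) (hy : y ∈ F)
    (hxy : x ≠ y) :
    cxSign k F x * cxSign k (F.erase x) y = -(cxSign k F y * cxSign k (F.erase y) x) := by
  wlog hlt : x < y generalizing x y
  · rw [this hy hx hxy.symm (hxy.lt_or_gt.resolve_left hlt), neg_neg]
  -- erasing the smaller vertex `x` moves `y` down by one; erasing `y` does not move `x`
  have hy' : (F.erase x).filter (· < y) = (F.filter (· < y)).erase x := filter_erase _ _ _
  have hx' : (F.erase y).filter (· < x) = F.filter (· < x) := by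
    rw [filter_erase, erase_eq_of_notMem]
    simp only [mem_filter, not_and, not_lt]
    exact fun _ => hlt.le
  have hcard := card_erase_add_one (mem_filter.2 ⟨hx, hlt⟩ : x ∈ F.filter (· < y))
  simp only [cxSign]
  rw [hy', hx', ← hcard, pow_succ]
  ring

lemma cxSign_mul_cxSign {F : Finset V} {x y : V} (hx : x ∈ F) (hy : y ∈ F) (hxy : x ≠ y) :
    cxSign k F x * cxSign k F y = -(cxSign k (F.erase x) y * cxSign k (F.erase y) x) := by
  linear_combination
    (cxSign k (F.erase x) y * cxSign k F y) * cxSign_mul_cxSign_erase k hx hy hxy -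
      (cxSign k F x * cxSign k F y) * cxSign_mul_self k (F.erase x) y -
      (cxSign k (F.erase x) y * cxSign k (F.erase y) x) * cxSign_mul_self k F y

lemma cxBoundary_eq_chainMap (Δ : Finset V → Prop) (n : ℕ) :
    cxBoundary k Δ n =
      chainMap k fun E => ∑ z ∈ E, cxSign k E z • faceChain k Δ n (E.erase z) :=
  chain_hom_ext k fun F => by
    rw [chainMap_faceChain, if_pos F.2, faceChain_val, cxBoundary, Finsupp.lsum_single,
      LinearMap.toSpanSingleton_apply, one_smul, ← sum_attach]
    rfl

lemma cxBoundary_faceChain {n : ℕ} {E : Finset V} (hE : Δ E) (hc : E.card = n + 1) :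
    cxBoundary k Δ n (faceChain k Δ (n + 1) E) =
      ∑ z ∈ E, cxSign k E z • faceChain k Δ n (E.erase z) := by
  rw [cxBoundary_eq_chainMap, chainMap_faceChain, if_pos ⟨hE, hc⟩]

lemma cxBoundary_comp_cxBoundary (hΔ : IsComplex Δ) (n : ℕ) :
    (cxBoundary k Δ n).comp (cxBoundary k Δ (n + 1)) = 0 := by
  refine chain_hom_ext k fun ⟨F, hF, hc⟩ => ?_
  have hterm : ∀ z ∈ F, cxBoundary k Δ n (cxSign k F z • faceChain k Δ (n + 1) (F.erase z)) =
      ∑ y ∈ F.erase z, (cxSign k F z * cxSign k (F.erase z) y) •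
        faceChain k Δ n ((F.erase z).erase y) := fun z hz => by
    rw [map_smul, cxBoundary_faceChain k (hΔ hF (erase_subset _ _))
      (by rw [card_erase_of_mem hz, hc, Nat.add_sub_cancel]), smul_sum]
    simp only [smul_smul]
  rw [LinearMap.comp_apply, cxBoundary_faceChain k hF hc, map_sum, sum_congr rfl hterm,
    sum_sigma', LinearMap.zero_apply]
  -- the terms indexed by `(z, y)` and `(y, z)` cancel
  refine sum_involution (fun p _ => ⟨p.2, p.1⟩) (fun ⟨z, y⟩ hp => ?_) (fun ⟨z, y⟩ hp _ => ?_)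
    (fun ⟨z, y⟩ hp => ?_) (fun _ _ => rfl)
  · obtain ⟨hz, hyz, hy⟩ : z ∈ F ∧ y ≠ z ∧ y ∈ F := by simpa using hp
    dsimp only
    rw [erase_right_comm, cxSign_mul_cxSign_erase k hz hy hyz.symm, neg_smul, neg_add_cancel]
  · obtain ⟨-, hyz, -⟩ : z ∈ F ∧ y ≠ z ∧ y ∈ F := by simpa using hp
    simpa using fun h _ => hyz h
  · obtain ⟨hz, hyz, hy⟩ : z ∈ F ∧ y ≠ z ∧ y ∈ F := by simpa using hp
    simpa [hy, hz] using hyz.symm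

lemma HNontrivial.nonempty_faces {m : ℕ} (h : HNontrivial k Δ (m + 1)) :
    Nonempty (Faces Δ (m + 1)) := by
  by_contra hne
  rw [not_nonempty_iff] at hne
  exact h fun z _ => by simp [Subsingleton.elim z 0]

end SimplicialChains

noncomputable section DeletionLink

variable {V : Type} {Δ : Finset V → Prop}

-- `lkC` was elaborated with the classical `DecidableEq` instance; this restates it for any other.
lemma lkC_iff [DecidableEq V] {x : V} {E : Finset V} :
    lkC Δ x E ↔ x ∉ E ∧ Δ (insert x E) := by
  unfold lkC
  congr!

lemma IsComplex.del (hΔ : IsComplex Δ) (x : V) : IsComplex (delC Δ x) :=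
  fun _ _ hF hGF => ⟨hΔ hF.1 hGF, fun hx => hF.2 (hGF hx)⟩

lemma IsComplex.lk (hΔ : IsComplex Δ) (x : V) : IsComplex (lkC Δ x) :=
  fun _ _ hF hGF => ⟨fun hx => hF.1 (hGF hx), hΔ hF.2 (insert_subset_insert x hGF)⟩

lemma lkC_erase [DecidableEq V] {F : Finset V} {x : V} (hF : Δ F) (hx : x ∈ F) :
    lkC Δ x (F.erase x) :=
  lkC_iff.2 ⟨notMem_erase x F, by rwa [insert_erase hx]⟩

variable (k : Type) [Field k]

/-! `ofDel`, `toDel`, `toLk` and `ofLk` are the inclusions and projections of the splitting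
`C(Δ) = C(del_Δ x) ⊕ C(lk_Δ x)[1]`; `ofDel` and `toLk` are chain maps, the latter up to sign. -/

def ofDel (Δ : Finset V → Prop) (x : V) (n : ℕ) :
    (Faces (delC Δ x) n →₀ k) →ₗ[k] (Faces Δ n →₀ k) :=
  chainMap k (faceChain k Δ n)

def toDel (Δ : Finset V → Prop) (x : V) (n : ℕ) :
    (Faces Δ n →₀ k) →ₗ[k] (Faces (delC Δ x) n →₀ k) :=
  chainMap k (faceChain k (delC Δ x) n)

lemma toDel_comp_ofDel (x : V) (n : ℕ) :
    (toDel k Δ x n).comp (ofDel k Δ x n) = LinearMap.id :=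
  chain_hom_ext k fun ⟨F, hF, hc⟩ => by
    simp [toDel, ofDel, chainMap_faceChain, hF, hF.1, hc]

lemma ofDel_injective (x : V) (n : ℕ) : Function.Injective (ofDel k Δ x n) :=
  Function.LeftInverse.injective (g := toDel k Δ x n) fun c =>
    LinearMap.congr_fun (toDel_comp_ofDel k x n) c

variable [LinearOrder V]

def toLk (Δ : Finset V → Prop) (x : V) (n : ℕ) :
    (Faces Δ (n + 1) →₀ k) →ₗ[k] (Faces (lkC Δ x) n →₀ k) :=
  chainMap k fun F => cxSign k F x • faceChain k (lkC Δ x) n (F.erase x)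

def ofLk (Δ : Finset V → Prop) (x : V) (n : ℕ) :
    (Faces (lkC Δ x) n →₀ k) →ₗ[k] (Faces Δ (n + 1) →₀ k) :=
  chainMap k fun F => cxSign k (insert x F) x • faceChain k Δ (n + 1) (insert x F)

lemma toLk_faceChain (x : V) {n : ℕ} {E : Finset V} (hE : Δ E) (hc : E.card = n + 1) :
    toLk k Δ x n (faceChain k Δ (n + 1) E) =
      cxSign k E x • faceChain k (lkC Δ x) n (E.erase x) := by
  rw [toLk, chainMap_faceChain, if_pos ⟨hE, hc⟩]

lemma toLk_comp_ofLk (x : V) (n : ℕ) :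
    (toLk k Δ x n).comp (ofLk k Δ x n) = LinearMap.id :=
  chain_hom_ext k fun ⟨E, hE, hc⟩ => by
    obtain ⟨hx, hxE⟩ := lkC_iff.1 hE
    simp [toLk, ofLk, chainMap_faceChain, hE, hxE, hc, hx, smul_smul, cxSign_mul_self,
      card_insert_of_notMem]

lemma ofDel_comp_toDel_add_ofLk_comp_toLk (x : V) (n : ℕ) :
    (ofDel k Δ x (n + 1)).comp (toDel k Δ x (n + 1)) + (ofLk k Δ x n).comp (toLk k Δ x n) =
      LinearMap.id :=
  chain_hom_ext k fun ⟨F, hF, hc⟩ => by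
    by_cases hx : x ∈ F
    · have hlk : lkC Δ x (F.erase x) ∧ (F.erase x).card = n := by
        refine ⟨lkC_erase hF hx, ?_⟩
        rw [card_erase_of_mem hx, hc]
        rfl
      simp [toDel, ofDel, toLk, ofLk, chainMap_faceChain, hF, hc, hx, hlk, delC, smul_smul,
        cxSign_mul_self, insert_erase hx]
    · simp [toDel, ofDel, toLk, ofLk, chainMap_faceChain, hF, hc, hx, delC, faceChain_of_card_ne]

lemma cxBoundary_comp_ofDel (hΔ : IsComplex Δ) (x : V) (n : ℕ) :
    (cxBoundary k Δ n).comp (ofDel k Δ x (n + 1)) =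
      (ofDel k Δ x n).comp (cxBoundary k (delC Δ x) n) :=
  chain_hom_ext k fun ⟨F, hF, hc⟩ => by
    rw [LinearMap.comp_apply, LinearMap.comp_apply, ofDel, chainMap_faceChain,
      if_pos ⟨hF, hc⟩, cxBoundary_faceChain k hF.1 hc, cxBoundary_faceChain k hF hc, map_sum]
    refine sum_congr rfl fun z hz => ?_
    rw [map_smul, ofDel, chainMap_faceChain,
      if_pos ⟨(hΔ.del x) hF (erase_subset z F), by rw [card_erase_of_mem hz, hc]; rfl⟩]

lemma toLk_comp_cxBoundary (hΔ : IsComplex Δ) (x : V) (n : ℕ) :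
    (toLk k Δ x n).comp (cxBoundary k Δ (n + 1)) =
      -((cxBoundary k (lkC Δ x) n).comp (toLk k Δ x (n + 1))) :=
  chain_hom_ext k fun ⟨F, hF, hc⟩ => by
    have hfacet : ∀ z ∈ F, Δ (F.erase z) ∧ (F.erase z).card = n + 1 := fun z hz =>
      ⟨hΔ hF (erase_subset z F), by rw [card_erase_of_mem hz, hc]; rfl⟩
    rw [LinearMap.comp_apply, LinearMap.neg_apply, LinearMap.comp_apply,
      cxBoundary_faceChain k hF hc, map_sum, toLk_faceChain k x hF hc]
    by_cases hx : x ∈ F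
    · have hcx : (F.erase x).card = n + 1 := (hfacet x hx).2
      rw [map_smul, cxBoundary_faceChain k (lkC_erase hF hx) hcx, smul_sum, ← sum_neg_distrib,
        ← add_sum_erase F _ hx, map_smul, toLk_faceChain k x (hfacet x hx).1 hcx,
        erase_eq_of_notMem (notMem_erase x F), faceChain_of_card_ne k (by omega), smul_zero,
        smul_zero, zero_add]
      refine sum_congr rfl fun z hz => ?_
      obtain ⟨hzx, hzF⟩ := mem_erase.1 hz
      rw [map_smul, toLk_faceChain k x (hfacet z hzF).1 (hfacet z hzF).2, smul_smul, smul_smul,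
        erase_right_comm, cxSign_mul_cxSign_erase k hzF hx hzx, neg_smul]
    · rw [erase_eq_of_notMem hx, faceChain_of_card_ne k (by omega), smul_zero, map_zero,
        neg_zero]
      refine sum_eq_zero fun z hz => ?_
      rw [map_smul, toLk_faceChain k x (hfacet z hz).1 (hfacet z hz).2,
        erase_eq_of_notMem fun h => hx (mem_of_mem_erase h),
        faceChain_of_card_ne k (by rw [(hfacet z hz).2]; omega), smul_zero, smul_zero]

lemma toLk_mem_cxCycles (hΔ : IsComplex Δ) (x : V) {m : ℕ} {z : Faces Δ (m + 1) →₀ k}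
    (hz : z ∈ cxCycles k Δ (m + 1)) : toLk k Δ x m z ∈ cxCycles k (lkC Δ x) m := by
  cases m with
  | zero => exact Submodule.mem_top
  | succ n =>
    have h := LinearMap.congr_fun (toLk_comp_cxBoundary k hΔ x n) z
    rw [LinearMap.comp_apply, LinearMap.neg_apply, LinearMap.comp_apply,
      LinearMap.mem_ker.1 hz, map_zero, zero_eq_neg] at h
    exact LinearMap.mem_ker.2 h

theorem cxCycles_le_range_of_delC_of_lkC (hΔ : IsComplex Δ) (x : V) (m : ℕ)
    (hdel : cxCycles k (delC Δ x) (m + 1) ≤ LinearMap.range (cxBoundary k (delC Δ x) (m + 1)))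
    (hlk : cxCycles k (lkC Δ x) m ≤ LinearMap.range (cxBoundary k (lkC Δ x) m)) :
    cxCycles k Δ (m + 1) ≤ LinearMap.range (cxBoundary k Δ (m + 1)) := by
  intro z hz
  obtain ⟨u, hu⟩ := hlk (toLk_mem_cxCycles k hΔ x hz)
  -- `z'` is homologous to `z` and has no face through `x`
  set z' := z + cxBoundary k Δ (m + 1) (ofLk k Δ x (m + 1) u) with hz'_def
  have hz'_lk : toLk k Δ x m z' = 0 := by
    have h := LinearMap.congr_fun (toLk_comp_ofLk k (Δ := Δ) x (m + 1)) u
    rw [LinearMap.comp_apply, LinearMap.id_apply] at h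
    rw [map_add, ← LinearMap.comp_apply, toLk_comp_cxBoundary k hΔ, LinearMap.neg_apply,
      LinearMap.comp_apply, h, hu, add_neg_cancel]
  have hz'_del : ofDel k Δ x (m + 1) (toDel k Δ x (m + 1) z') = z' := by
    simpa [hz'_lk] using LinearMap.congr_fun (ofDel_comp_toDel_add_ofLk_comp_toLk k x m) z'
  have hz'_cyc : cxBoundary k Δ m z' = 0 := by
    rw [map_add, LinearMap.mem_ker.1 hz, ← LinearMap.comp_apply,
      cxBoundary_comp_cxBoundary k hΔ, zero_add, LinearMap.zero_apply]
  have hcyc : toDel k Δ x (m + 1) z' ∈ cxCycles k (delC Δ x) (m + 1) := by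
    refine LinearMap.mem_ker.2 (ofDel_injective k x m ?_)
    rw [← LinearMap.comp_apply, ← cxBoundary_comp_ofDel k hΔ, LinearMap.comp_apply, hz'_del,
      hz'_cyc, map_zero]
  obtain ⟨v, hv⟩ := hdel hcyc
  refine ⟨ofDel k Δ x (m + 2) v - ofLk k Δ x (m + 1) u, ?_⟩
  rw [map_sub, ← LinearMap.comp_apply, cxBoundary_comp_ofDel k hΔ, LinearMap.comp_apply, hv,
    hz'_del, hz'_def, add_sub_cancel_right]

theorem HNontrivial.delC_or_lkC (hΔ : IsComplex Δ) (x : V) {m : ℕ}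
    (h : HNontrivial k Δ (m + 1)) :
    HNontrivial k (delC Δ x) (m + 1) ∨ HNontrivial k (lkC Δ x) m := by
  unfold HNontrivial at *
  by_contra! hne
  exact h (cxCycles_le_range_of_delC_of_lkC k hΔ x m hne.1 hne.2)

end DeletionLink

noncomputable section Cone

variable {V : Type} [LinearOrder V] (k : Type) [Field k] {Δ : Finset V → Prop}

/-- The contracting homotopy of a cone with apex `x`. It vanishes on faces through `x`, since
then `insert x F = F` has the wrong cardinality. -/
def coneHomotopy (Δ : Finset V → Prop) (x : V) (n : ℕ) :
    (Faces Δ n →₀ k) →ₗ[k] (Faces Δ (n + 1) →₀ k) :=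
  chainMap k fun F => cxSign k (insert x F) x • faceChain k Δ (n + 1) (insert x F)

lemma coneHomotopy_faceChain (x : V) {n : ℕ} {F : Finset V} (hF : Δ F) (hc : F.card = n) :
    coneHomotopy k Δ x n (faceChain k Δ n F) =
      cxSign k (insert x F) x • faceChain k Δ (n + 1) (insert x F) := by
  rw [coneHomotopy, chainMap_faceChain, if_pos ⟨hF, hc⟩]

lemma coneHomotopy_faceChain_of_mem {x : V} {n : ℕ} {F : Finset V} (hF : Δ F)
    (hc : F.card = n) (hx : x ∈ F) : coneHomotopy k Δ x n (faceChain k Δ n F) = 0 := by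
  rw [coneHomotopy_faceChain k x hF hc, insert_eq_of_mem hx, faceChain_of_card_ne k (by omega),
    smul_zero]

variable {x : V}

lemma cxBoundary_comp_coneHomotopy_zero (hcone : ∀ F, Δ F → Δ (insert x F)) :
    (cxBoundary k Δ 0).comp (coneHomotopy k Δ x 0) = LinearMap.id :=
  chain_hom_ext k fun ⟨F, hF, hc⟩ => by
    obtain rfl : F = ∅ := card_eq_zero.1 hc
    rw [LinearMap.comp_apply, coneHomotopy_faceChain k x hF hc,
      map_smul, cxBoundary_faceChain k (hcone _ hF) (card_singleton x), insert_empty,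
      sum_singleton, erase_singleton, smul_smul, cxSign_mul_self, one_smul, LinearMap.id_apply]

lemma cxBoundary_comp_coneHomotopy_add (hΔ : IsComplex Δ) (hcone : ∀ F, Δ F → Δ (insert x F))
    (n : ℕ) :
    (cxBoundary k Δ (n + 1)).comp (coneHomotopy k Δ x (n + 1)) +
      (coneHomotopy k Δ x n).comp (cxBoundary k Δ n) = LinearMap.id :=
  chain_hom_ext k fun ⟨F, hF, hc⟩ => by
    have hfacet : ∀ z ∈ F, Δ (F.erase z) ∧ (F.erase z).card = n := fun z hz =>
      ⟨hΔ hF (erase_subset z F), by rw [card_erase_of_mem hz, hc]; rfl⟩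
    rw [LinearMap.add_apply, LinearMap.comp_apply, LinearMap.comp_apply, LinearMap.id_apply,
      cxBoundary_faceChain k hF hc, map_sum]
    by_cases hx : x ∈ F
    · rw [coneHomotopy_faceChain_of_mem k hF hc hx, map_zero, zero_add,
        ← add_sum_erase F _ hx, sum_eq_zero fun z hz => ?_, add_zero, map_smul,
        coneHomotopy_faceChain k x (hfacet x hx).1 (hfacet x hx).2, insert_erase hx, smul_smul,
        cxSign_mul_self, one_smul]
      obtain ⟨hzx, hzF⟩ := mem_erase.1 hz
      rw [map_smul, coneHomotopy_faceChain_of_mem k (hfacet z hzF).1 (hfacet z hzF).2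
        (mem_erase.2 ⟨hzx.symm, hx⟩), smul_zero]
    · have hc' : (insert x F).card = n + 1 + 1 := by rw [card_insert_of_notMem hx, hc]
      rw [coneHomotopy_faceChain k x hF hc, map_smul,
        cxBoundary_faceChain k (hcone F hF) hc', sum_insert hx, erase_insert hx, smul_add,
        smul_smul, cxSign_mul_self, one_smul, add_assoc, smul_sum, ← sum_add_distrib,
        sum_eq_zero fun z hz => ?_, add_zero]
      have hzx : z ≠ x := fun h => hx (h ▸ hz)
      rw [map_smul, coneHomotopy_faceChain k x (hfacet z hz).1 (hfacet z hz).2,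
        ← erase_insert_of_ne hzx.symm, smul_smul, smul_smul, ← add_smul]
      set F' := insert x F
      have hF' : F'.erase x = F := erase_insert hx
      rw [← hF', cxSign_mul_cxSign k (mem_insert_self x F) (mem_insert_of_mem hz) hzx.symm,
        neg_add_cancel, zero_smul]

lemma not_hNontrivial_of_cone (hΔ : IsComplex Δ) (hcone : ∀ F, Δ F → Δ (insert x F)) (m : ℕ) :
    ¬HNontrivial k Δ m := by
  refine not_not.2 fun z hz => ?_
  cases m with
  | zero =>
    exact ⟨coneHomotopy k Δ x 0 z, by
      simpa using LinearMap.congr_fun (cxBoundary_comp_coneHomotopy_zero k hcone) z⟩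
  | succ n =>
    refine ⟨coneHomotopy k Δ x (n + 1) z, ?_⟩
    have h := LinearMap.congr_fun (cxBoundary_comp_coneHomotopy_add k hΔ hcone n) z
    rwa [LinearMap.add_apply, LinearMap.comp_apply, LinearMap.comp_apply,
      LinearMap.mem_ker.1 hz, map_zero, add_zero, LinearMap.id_apply] at h

end Cone

theorem SimpleGraph.IsAcyclic.exists_adj_forall_adj_eq {W : Type} [Finite W] {H : SimpleGraph W}
    (h : H.IsAcyclic) {u v : W} (huv : H.Adj u v) :
    ∃ x y, H.Adj x y ∧ ∀ z, H.Adj x z → z = y := by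
  have : Nonempty W := ⟨u⟩
  -- the first vertex of a longest path is a leaf
  obtain ⟨a, b, p, hp, hmax⟩ := SimpleGraph.Walk.exists_isPath_forall_isPath_length_le_length H
  have hnil : ¬p.Nil := fun hnil => by
    have := hmax u v (.cons huv .nil) (by simp [huv.ne])
    simp [SimpleGraph.Walk.length_eq_zero_iff.2 hnil] at this
  refine ⟨a, p.snd, p.adj_snd hnil, fun z hz => h.eq_snd_of_adj_start hp hz ?_⟩
  by_contra hzp
  have := hmax z b (p.cons hz.symm) (hp.cons hzp)
  simp at this

section IndependenceComplex

variable {V : Type} (G : SimpleGraph V)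

lemma isComplex_restrictC_indepFaces (S : Set V) : IsComplex (restrictC (indepFaces G) S) :=
  fun _ _ hF hsub => ⟨(coe_subset.2 hsub).trans hF.1,
    fun u hu v hv => hF.2 u (hsub hu) v (hsub hv)⟩

lemma mem_closedNbrOn {S : Finset V} {x z : V} :
    z ∈ closedNbrOn G S x ↔ z ∈ S ∧ (z = x ∨ G.Adj x z) :=
  mem_filter

lemma closedNbrOn_subset (S : Finset V) (x : V) : closedNbrOn G S x ⊆ S :=
  filter_subset _ S

variable [DecidableEq V]

lemma mem_sdiff_closedNbrOn {S : Finset V} {x z : V} :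
    z ∈ S \ closedNbrOn G S x ↔ z ∈ S ∧ z ≠ x ∧ ¬G.Adj x z := by
  rw [mem_sdiff, mem_closedNbrOn]
  tauto

lemma sdiff_closedNbrOn_ssubset {S : Finset V} {x : V} (hx : x ∈ S) :
    S \ closedNbrOn G S x ⊂ S :=
  sdiff_ssubset (closedNbrOn_subset G S x) ⟨x, (mem_closedNbrOn G).2 ⟨hx, .inl rfl⟩⟩

lemma delC_restrictC_indepFaces (S : Finset V) (x : V) :
    delC (restrictC (indepFaces G) ↑S) x = restrictC (indepFaces G) ↑(S.erase x) := by
  ext F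
  simp only [delC, restrictC, coe_erase, Set.subset_sdiff, Set.disjoint_singleton_right,
    mem_coe]
  tauto

lemma lkC_restrictC_indepFaces {S : Finset V} {x : V} (hx : x ∈ S) :
    lkC (restrictC (indepFaces G) ↑S) x =
      restrictC (indepFaces G) ↑(S \ closedNbrOn G S x) := by
  ext F
  simp only [lkC_iff, restrictC, indepFaces, coe_subset, insert_subset_iff]
  simp only [subset_iff, mem_insert, mem_sdiff_closedNbrOn]
  constructor
  · rintro ⟨hxF, ⟨-, hFS⟩, hind⟩
    exact ⟨fun z hz => ⟨hFS hz, fun h => hxF (h ▸ hz), hind x (.inl rfl) z (.inr hz)⟩,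
      fun u hu v hv => hind u (.inr hu) v (.inr hv)⟩
  · rintro ⟨hFS, hind⟩
    refine ⟨fun hxF => (hFS hxF).2.1 rfl, ⟨hx, fun z hz => (hFS hz).1⟩, ?_⟩
    rintro u (rfl | hu) v (rfl | hv)
    · exact G.irrefl
    · exact (hFS hv).2.2
    · exact fun h => (hFS hu).2.2 h.symm
    · exact hind u hu v hv

end IndependenceComplex

section IndependenceComplexHomology

variable {V : Type} [LinearOrder V] (k : Type) [Field k] (G : SimpleGraph V)

theorem HNontrivial.restrictC_erase_or_sdiff_closedNbrOn {S : Finset V} {x : V} (hx : x ∈ S)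
    {m : ℕ} (h : HNontrivial k (restrictC (indepFaces G) ↑S) (m + 1)) :
    HNontrivial k (restrictC (indepFaces G) ↑(S.erase x)) (m + 1) ∨
      HNontrivial k (restrictC (indepFaces G) ↑(S \ closedNbrOn G S x)) m := by
  rw [← delC_restrictC_indepFaces, ← lkC_restrictC_indepFaces G hx]
  exact h.delC_or_lkC k (isComplex_restrictC_indepFaces G S) x

-- Without edges the complex is a simplex: a cone over any vertex, or `{∅}` when `S = ∅`.
lemma not_hNontrivial_succ_of_forall_not_adj {S : Finset V}
    (hS : ∀ u ∈ S, ∀ v ∈ S, ¬G.Adj u v) (m : ℕ) :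
    ¬HNontrivial k (restrictC (indepFaces G) ↑S) (m + 1) := by
  intro h
  rcases S.eq_empty_or_nonempty with rfl | ⟨x, hx⟩
  · obtain ⟨⟨F, ⟨hF, -⟩, hc⟩⟩ := h.nonempty_faces
    simp [subset_empty.1 (coe_subset.1 hF)] at hc
  · refine not_hNontrivial_of_cone k (isComplex_restrictC_indepFaces G S) (x := x)
      (fun F hF => ?_) _ h
    have hxF : insert x F ⊆ S := insert_subset hx (coe_subset.1 hF.1)
    exact ⟨coe_subset.2 hxF, fun u hu v hv => hS u (hxF hu) v (hxF hv)⟩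

end IndependenceComplexHomology

noncomputable section InvariantsOn

variable {V : Type} (G : SimpleGraph V)

def IsInducedMatchingOn (S : Finset V) (M : Finset (V × V)) : Prop :=
  IsInducedMatching G M ∧ ∀ p ∈ M, p.1 ∈ S ∧ p.2 ∈ S

def inducedMatchingNumberOn (S : Finset V) : ℕ :=
  sSup {n : ℕ | ∃ M, IsInducedMatchingOn G S M ∧ M.card = n}

def decyclingNumberOn (S : Finset V) : ℕ :=
  sInf {n : ℕ | ∃ D ⊆ S, D.card = n ∧ (G.induce {v | v ∈ S ∧ v ∉ D}).IsAcyclic}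

lemma IsInducedMatching.insert [DecidableEq V] {M : Finset (V × V)} (hM : IsInducedMatching G M)
    {a b : V} (hab : G.Adj a b)
    (hfar : ∀ p ∈ M, ∀ w ∈ [p.1, p.2], a ≠ w ∧ b ≠ w ∧ ¬G.Adj a w ∧ ¬G.Adj b w) :
    IsInducedMatching G (insert (a, b) M) := by
  refine ⟨by simpa [hab] using hM.1, ?_⟩
  simp only [mem_insert]
  rintro p (rfl | hp) q (rfl | hq) hpq
  · exact absurd rfl hpq
  · obtain ⟨⟨h1, h2, h3, h4⟩, h5, h6, h7, h8⟩ := by simpa using hfar q hq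
    exact ⟨h1, h5, h2, h6, h3, h7, h4, h8⟩
  · obtain ⟨⟨h1, h2, h3, h4⟩, h5, h6, h7, h8⟩ := by simpa using hfar p hp
    exact ⟨Ne.symm h1, Ne.symm h2, Ne.symm h5, Ne.symm h6, fun h => h3 h.symm,
      fun h => h4 h.symm, fun h => h7 h.symm, fun h => h8 h.symm⟩
  · exact hM.2 p hp q hq hpq

lemma decyclingNumberOn_le_card_inter [DecidableEq V] {S T D : Finset V} (hTS : T ⊆ S)
    (hD : (G.induce {v | v ∈ S ∧ v ∉ D}).IsAcyclic) : decyclingNumberOn G T ≤ (D ∩ T).card :=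
  Nat.sInf_le ⟨D ∩ T, inter_subset_right, rfl, hD.embedding (G.induceHomOfLE <| by
    rintro v ⟨hvT, hvD⟩
    exact ⟨hTS hvT, fun hv => hvD (mem_inter.2 ⟨hv, hvT⟩)⟩)⟩

lemma exists_decyclingSet (S : Finset V) :
    ∃ D ⊆ S, D.card = decyclingNumberOn G S ∧ (G.induce {v | v ∈ S ∧ v ∉ D}).IsAcyclic :=
  Nat.sInf_mem (s := {n | ∃ D ⊆ S, D.card = n ∧ (G.induce {v | v ∈ S ∧ v ∉ D}).IsAcyclic})
    ⟨S.card, S, subset_refl S, rfl, fun v => absurd v.2.1 v.2.2⟩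

lemma decyclingNumberOn_mono {S T : Finset V} (h : S ⊆ T) :
    decyclingNumberOn G S ≤ decyclingNumberOn G T := by
  classical
  obtain ⟨D, -, hcard, hD⟩ := exists_decyclingSet G T
  exact (decyclingNumberOn_le_card_inter G h hD).trans (hcard ▸ card_le_card inter_subset_left)

lemma isAcyclic_of_decyclingNumberOn_eq_zero {S : Finset V} (h : decyclingNumberOn G S = 0) :
    (G.induce (↑S : Set V)).IsAcyclic := by
  obtain ⟨D, -, hcard, hD⟩ := exists_decyclingSet G S
  rw [h, card_eq_zero] at hcard
  subst hcard
  exact hD.embedding (G.induceHomOfLE <| by exact fun v hv => ⟨hv, notMem_empty v⟩)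

lemma exists_decyclingNumberOn_sdiff_closedNbrOn_lt [DecidableEq V] {S : Finset V}
    (h : 0 < decyclingNumberOn G S) :
    ∃ x ∈ S, decyclingNumberOn G (S \ closedNbrOn G S x) < decyclingNumberOn G S := by
  obtain ⟨D, hDS, hcard, hD⟩ := exists_decyclingSet G S
  obtain ⟨x, hx⟩ := card_pos.1 (hcard ▸ h)
  refine ⟨x, hDS hx, (decyclingNumberOn_le_card_inter G sdiff_subset hD).trans_lt ?_⟩
  rw [← hcard]
  refine card_lt_card ⟨inter_subset_left, fun hsub => ?_⟩
  exact ((mem_sdiff_closedNbrOn G).1 (mem_inter.1 (hsub hx)).2).2.1 rfl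

lemma bddAbove_card_setOf {α : Type} [Fintype α] (P : Finset α → Prop) :
    BddAbove {n : ℕ | ∃ s, P s ∧ s.card = n} :=
  ⟨Fintype.card α, by rintro _ ⟨s, -, rfl⟩; exact card_le_univ s⟩

variable [Fintype V]

lemma IsInducedMatchingOn.card_le {S : Finset V} {M : Finset (V × V)}
    (hM : IsInducedMatchingOn G S M) : M.card ≤ inducedMatchingNumberOn G S :=
  le_csSup (bddAbove_card_setOf _) ⟨M, hM, rfl⟩

lemma exists_isInducedMatchingOn_card_eq (S : Finset V) :
    ∃ M, IsInducedMatchingOn G S M ∧ M.card = inducedMatchingNumberOn G S :=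
  Nat.sSup_mem (s := {n | ∃ M, IsInducedMatchingOn G S M ∧ M.card = n})
    ⟨0, ∅, ⟨⟨by simp, by simp⟩, by simp⟩, rfl⟩ (bddAbove_card_setOf _)

lemma inducedMatchingNumberOn_mono {S T : Finset V} (h : S ⊆ T) :
    inducedMatchingNumberOn G S ≤ inducedMatchingNumberOn G T := by
  obtain ⟨M, hM, hcard⟩ := exists_isInducedMatchingOn_card_eq G S
  exact hcard ▸ IsInducedMatchingOn.card_le G ⟨hM.1, fun p hp => (hM.2 p hp).imp (@h _) (@h _)⟩

lemma inducedMatchingNumberOn_le (S : Finset V) :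
    inducedMatchingNumberOn G S ≤ inducedMatchingNumber G := by
  obtain ⟨M, hM, hcard⟩ := exists_isInducedMatchingOn_card_eq G S
  exact hcard ▸ le_csSup (bddAbove_card_setOf _) ⟨M, hM.1, rfl⟩

lemma inducedMatchingNumberOn_sdiff_closedNbrOn_lt [DecidableEq V] {S : Finset V} {x y : V}
    (hx : x ∈ S) (hy : y ∈ S) (hxy : G.Adj x y) (hleaf : ∀ z ∈ S, G.Adj x z → z = y) :
    inducedMatchingNumberOn G (S \ closedNbrOn G S y) < inducedMatchingNumberOn G S := by
  obtain ⟨M, ⟨hM, hMT⟩, hcard⟩ := exists_isInducedMatchingOn_card_eq G (S \ closedNbrOn G S y)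
  have hfar : ∀ w ∈ S \ closedNbrOn G S y, x ≠ w ∧ y ≠ w ∧ ¬G.Adj x w ∧ ¬G.Adj y w := by
    intro w hw
    obtain ⟨hwS, hwy, hyw⟩ := (mem_sdiff_closedNbrOn G).1 hw
    exact ⟨fun h => hyw (h ▸ hxy.symm), Ne.symm hwy, fun h => hwy (hleaf w hwS h), hyw⟩
  have hxyM : (x, y) ∉ M := fun h => (hfar x (hMT _ h).1).1 rfl
  have hM' : IsInducedMatchingOn G S (insert (x, y) M) := by
    refine ⟨IsInducedMatching.insert G hM hxy fun p hp w hw => hfar w ?_, ?_⟩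
    · simp only [List.mem_cons, List.not_mem_nil, or_false] at hw
      rcases hw with rfl | rfl
      exacts [(hMT p hp).1, (hMT p hp).2]
    · simp only [mem_insert, forall_eq_or_imp]
      exact ⟨⟨hx, hy⟩, fun p hp => ⟨(mem_sdiff.1 (hMT p hp).1).1, (mem_sdiff.1 (hMT p hp).2).1⟩⟩
  have := IsInducedMatchingOn.card_le G hM'
  rw [card_insert_of_notMem hxyM, hcard] at this
  omega

lemma decyclingNumberOn_le (S : Finset V) : decyclingNumberOn G S ≤ decyclingNumber G := by
  classical
  obtain ⟨D, hcard, hD⟩ := Nat.sInf_mem (s := {n : ℕ | ∃ D : Finset V, D.card = n ∧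
    (G.induce {v : V | v ∉ D}).IsAcyclic}) ⟨_, univ, rfl, fun v => absurd (mem_univ v.1) v.2⟩
  exact (decyclingNumberOn_le_card_inter G (subset_univ S)
    (hD.embedding (G.induceHomOfLE fun _ hv => hv.2))).trans
    ((card_le_card inter_subset_left).trans_eq hcard)

end InvariantsOn

theorem le_inducedMatchingNumberOn_add_decyclingNumberOn {V : Type} [Fintype V] [LinearOrder V]
    (k : Type) [Field k] (G : SimpleGraph V) (S : Finset V) {j : ℕ}
    (h : HNontrivial k (restrictC (indepFaces G) ↑S) j) :
    j ≤ inducedMatchingNumberOn G S + decyclingNumberOn G S := by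
  induction S using Finset.strongInduction generalizing j with | H S ih => ?_
  obtain _ | m := j
  · exact Nat.zero_le _
  have split : ∀ x ∈ S,
      m + 1 ≤ inducedMatchingNumberOn G (S.erase x) + decyclingNumberOn G (S.erase x) ∨
        m ≤ inducedMatchingNumberOn G (S \ closedNbrOn G S x) +
          decyclingNumberOn G (S \ closedNbrOn G S x) := fun x hx =>
    (h.restrictC_erase_or_sdiff_closedNbrOn k G hx).imp (ih _ (erase_ssubset hx))
      (ih _ (sdiff_closedNbrOn_ssubset G hx))
  have mono : ∀ T ⊆ S, inducedMatchingNumberOn G T ≤ inducedMatchingNumberOn G S ∧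
      decyclingNumberOn G T ≤ decyclingNumberOn G S := fun T hT =>
    ⟨inducedMatchingNumberOn_mono G hT, decyclingNumberOn_mono G hT⟩
  rcases Nat.eq_zero_or_pos (decyclingNumberOn G S) with hforest | hcycle
  · by_cases hedge : ∃ u ∈ S, ∃ v ∈ S, G.Adj u v
    · obtain ⟨u, hu, v, hv, huv⟩ := hedge
      obtain ⟨⟨x, hx⟩, ⟨y, hy⟩, hxy, hleaf⟩ :=
        (isAcyclic_of_decyclingNumberOn_eq_zero G hforest).exists_adj_forall_adj_eq
          (u := ⟨u, hu⟩) (v := ⟨v, hv⟩) huv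
      have hlt := inducedMatchingNumberOn_sdiff_closedNbrOn_lt G hx hy hxy
        fun z hz hxz => congrArg Subtype.val (hleaf ⟨z, hz⟩ hxz)
      have := mono _ (erase_subset y S)
      have := mono _ (sdiff_closedNbrOn_ssubset G hy).subset
      have := split y hy
      omega
    · push Not at hedge
      exact absurd h (not_hNontrivial_succ_of_forall_not_adj k G hedge m)
  · obtain ⟨x, hx, hlt⟩ := exists_decyclingNumberOn_sdiff_closedNbrOn_lt G hcycle
    have := mono _ (erase_subset x S)
    have := mono _ (sdiff_closedNbrOn_ssubset G hx).subset
    have := split x hx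
    omega

/-- For any graph `G`, `reg(G) ≤ im(G) + ∇(G)`. -/
theorem gReg_le_im_add_decycling {V : Type} [Fintype V] (k : Type) [Field k]
    (G : SimpleGraph V) :
    gReg k G ≤ inducedMatchingNumber G + decyclingNumber G := by
  let : LinearOrder V :=
    LinearOrder.lift' (Fintype.equivFin V) (Fintype.equivFin V).injective
  refine csSup_le' fun j ⟨S, hS⟩ => ?_
  rw [← Set.coe_toFinset S] at hS
  calc j ≤ _ := le_inducedMatchingNumberOn_add_decyclingNumberOn k G _ hS
    _ ≤ _ := add_le_add (inducedMatchingNumberOn_le G _) (decyclingNumberOn_le G _)
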